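/- Let r ≥ 2 and let G be a K_{r+1}-free graph. Suppose v is a vertex of G such that G − v is r-partite with parts U_1,…,U_r of sizes n_1,…,n_r, and let a_i = |Γ(v) ∩ U_i| denote the number of neighbors of v in U_i, where a_1 ≤ a_2 ≤ … ≤ a_r. Then e(G) ≤ Σ_{1 ≤ i < j ≤ r} n_i·n_j − a_1·a_2 + Σ_{i=1}^r a_i. -/

import Mathlib

open SimpleGraph

/-- The number of edges of a graph. -/
noncomputable def edgeCount {V : Type*} (G : SimpleGraph V) : ℕ := Nat.card G.edgeSet

/-- `t_r(n)`: the number of edges of the Turán graph `T_r(n)`. -/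
noncomputable def turanNum (r n : ℕ) : ℕ := edgeCount (turanGraph n r)

/-- `D_r(G)`: the minimum number of edges that must be removed from `G` to make it
`r`-partite (i.e. `r`-colorable). -/
noncomputable def minDel {V : Type*} (r : ℕ) (G : SimpleGraph V) : ℕ :=
  sInf {k | ∃ H : SimpleGraph V, H ≤ G ∧ H.Colorable r ∧ edgeCount G = edgeCount H + k}

/-- The blowup `G[n₁,…,n_k]` of a graph `G` on `Fin k`. -/
def blowup {k : ℕ} (G : SimpleGraph (Fin k)) (n : Fin k → ℕ) :
    SimpleGraph ((i : Fin k) × Fin (n i)) :=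
  SimpleGraph.comap Sigma.fst G

/-- The adjacency relation of the pentagon `v₁v₂v₅v₄v₃` on `{0,…,4}` (0-indexed),
i.e. the edges `v₁v₂, v₂v₅, v₅v₄, v₄v₃, v₃v₁`. -/
def pentAdj (a b : ℕ) : Prop :=
  (a = 0 ∧ b = 1) ∨ (a = 1 ∧ b = 0) ∨ (a = 1 ∧ b = 4) ∨ (a = 4 ∧ b = 1) ∨
  (a = 4 ∧ b = 3) ∨ (a = 3 ∧ b = 4) ∨ (a = 3 ∧ b = 2) ∨ (a = 2 ∧ b = 3) ∨
  (a = 2 ∧ b = 0) ∨ (a = 0 ∧ b = 2)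

lemma pentAdj_symm {a b : ℕ} (h : pentAdj a b) : pentAdj b a := by
  rcases h with ⟨rfl, rfl⟩|⟨rfl, rfl⟩|⟨rfl, rfl⟩|⟨rfl, rfl⟩|⟨rfl, rfl⟩|⟨rfl, rfl⟩|⟨rfl, rfl⟩|⟨rfl, rfl⟩|⟨rfl, rfl⟩|⟨rfl, rfl⟩ <;> simp [pentAdj]

/-- The graph `L_r` on `r+3` vertices: the first five vertices induce the pentagon
`v₁v₂v₅v₄v₃`, and all other pairs of distinct vertices are adjacent. -/
def Lgraph (r : ℕ) : SimpleGraph (Fin (r + 3)) where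
  Adj a b := a ≠ b ∧ (5 ≤ (a : ℕ) ∨ 5 ≤ (b : ℕ) ∨ pentAdj (a : ℕ) (b : ℕ))
  symm := ⟨fun a b h => ⟨h.1.symm, by
    rcases h.2 with h2 | h2 | h2
    · exact Or.inr (Or.inl h2)
    · exact Or.inl h2
    · exact Or.inr (Or.inr (pentAdj_symm h2))⟩⟩
  loopless := ⟨fun a h => h.1 rfl⟩

/-- The sequence of part sizes `x, y, y, nn 0, nn 1, …` for a blowup of `L_r`. -/
def pentSizes (x y : ℕ) (nn : ℕ → ℕ) : ℕ → ℕ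
  | 0 => x
  | 1 => y
  | 2 => y
  | m + 3 => nn m

/-- The pentagon blowup `L_r[x, y, y, nn 0, …, nn (r-1)]`. -/
def pentagonBlowup (r x y : ℕ) (nn : ℕ → ℕ) :
    SimpleGraph ((i : Fin (r + 3)) × Fin (pentSizes x y nn i.val)) :=
  blowup (Lgraph r) (fun i => pentSizes x y nn i.val)

/-- Let `G` be `K_{r+1}`-free, `v` a vertex such that `G - v` is
`r`-partite with parts `U₁,…,U_r` of sizes `n₁,…,n_r`, and let `aᵢ = |Γ(v) ∩ Uᵢ|` with
`a₁ ≤ … ≤ a_r`. Then `e(G) ≤ Σ_{i<j} nᵢnⱼ - a₁a₂ + Σᵢ aᵢ`. -/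
theorem stmt15 {V : Type} [Fintype V] (r : ℕ) (hr : 2 ≤ r) (G : SimpleGraph V)
    (hfree : G.CliqueFree (r + 1)) (v : V) (U : Fin r → Set V)
    (hdisj : Pairwise fun i j => Disjoint (U i) (U j))
    (hcover : (⋃ i, U i) = {v}ᶜ)
    (hindep : ∀ i, ∀ w ∈ U i, ∀ w' ∈ U i, ¬G.Adj w w')
    (nn a : Fin r → ℕ)
    (hnn : ∀ i, nn i = Nat.card (U i))
    (ha : ∀ i, a i = Nat.card ((G.neighborSet v ∩ U i : Set V)))
    (hmono : Monotone a) :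
    (edgeCount G : ℤ) ≤
      (∑ p ∈ Finset.univ.filter (fun p : Fin r × Fin r => p.1 < p.2),
        (nn p.1 : ℤ) * (nn p.2 : ℤ))
      - (a ⟨0, by omega⟩ : ℤ) * (a ⟨1, by omega⟩ : ℤ) + ∑ i, (a i : ℤ) := by
  classical
  set i0 : Fin r := ⟨0, by omega⟩ with hi0
  set i1 : Fin r := ⟨1, by omega⟩ with hi1
  -- basic facts about the partition
  have hUv : ∀ i, v ∉ U i := by
    intro i hv
    have : v ∈ ⋃ i, U i := Set.mem_iUnion.2 ⟨i, hv⟩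
    rw [hcover] at this; exact this rfl
  have hex : ∀ w : V, w ≠ v → ∃ i, w ∈ U i := by
    intro w hw
    have : w ∈ ⋃ i, U i := by rw [hcover]; exact hw
    exact Set.mem_iUnion.1 this
  set idx : V → Fin r := fun w => if h : ∃ i, w ∈ U i then h.choose else i0 with hidxdef
  have hidx_mem : ∀ w, w ≠ v → w ∈ U (idx w) := by
    intro w hw
    have h := hex w hw
    simp only [hidxdef, dif_pos h]
    exact h.choose_spec
  have hidx_eq : ∀ {w : V} {i : Fin r}, w ∈ U i → idx w = i := by
    intro w i hwi
    have hwv : w ≠ v := fun h => hUv i (h ▸ hwi)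
    by_contra hne
    exact Set.disjoint_left.1 (hdisj hne) (hidx_mem w hwv) hwi
  have hidx_ne : ∀ {x y : V}, G.Adj x y → x ≠ v → y ≠ v → idx x ≠ idx y := by
    intro x y hxy hx hy he
    exact hindep (idx y) x (he ▸ hidx_mem x hx) y (hidx_mem y hy) hxy
  -- finsets
  set Uf : Fin r → Finset V := fun i => (U i).toFinset with hUfdef
  set Af : Fin r → Finset V := fun i => (G.neighborSet v ∩ U i).toFinset with hAfdef
  have hUfcard : ∀ i, (Uf i).card = nn i := by
    intro i; rw [hnn i, Nat.card_coe_set_eq, Set.ncard_eq_toFinset_card']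
  have hAfcard : ∀ i, (Af i).card = a i := by
    intro i; rw [ha i, Nat.card_coe_set_eq, Set.ncard_eq_toFinset_card']
  have hAfmem : ∀ {i : Fin r} {x : V}, x ∈ Af i ↔ G.Adj v x ∧ x ∈ U i := by
    intro i x; simp [hAfdef, mem_neighborSet]
  -- degree of v
  have hnbr : G.neighborFinset v = Finset.univ.biUnion Af := by
    ext x
    simp only [mem_neighborFinset, Finset.mem_biUnion, Finset.mem_univ, true_and]
    constructor
    · intro hx
      obtain ⟨i, hi⟩ := hex x (G.ne_of_adj hx).symm
      exact ⟨i, hAfmem.2 ⟨hx, hi⟩⟩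
    · rintro ⟨i, hx⟩; exact (hAfmem.1 hx).1
  have hdeg : (G.neighborFinset v).card = ∑ i, a i := by
    rw [hnbr, Finset.card_biUnion]
    · exact Finset.sum_congr rfl fun i _ => hAfcard i
    · intro i _ j _ hij
      rw [Function.onFun, Finset.disjoint_left]
      intro x hxi hxj
      exact Set.disjoint_left.1 (hdisj hij) (hAfmem.1 hxi).2 (hAfmem.1 hxj).2
  -- pair sets
  set S : Finset (V × V) := Finset.univ.filter (fun p : V × V => G.Adj p.1 p.2) with hSdef
  set D : Finset (V × V) := Finset.univ.filter
    (fun p : V × V => G.Adj p.1 p.2 ∧ p.1 ≠ v ∧ p.2 ≠ v ∧ idx p.1 < idx p.2) with hDdef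
  have h2e : 2 * G.edgeFinset.card = S.card := by rw [two_mul_card_edgeFinset]
  -- split S
  have hsplit1 : (S.filter fun p => p.1 = v).card + (S.filter fun p => p.1 ≠ v).card = S.card :=
    Finset.card_filter_add_card_filter_not _
  have hsplit2 : ((S.filter fun p => p.1 ≠ v).filter fun p => p.2 = v).card
      + ((S.filter fun p => p.1 ≠ v).filter fun p => p.2 ≠ v).card
      = (S.filter fun p => p.1 ≠ v).card :=
    Finset.card_filter_add_card_filter_not _
  have hc1 : (S.filter fun p => p.1 = v) = {v} ×ˢ G.neighborFinset v := by
    ext p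
    simp only [hSdef, Finset.mem_filter, Finset.filter_filter, Finset.mem_univ, true_and,
      Finset.mem_product, Finset.mem_singleton, mem_neighborFinset]
    constructor
    · rintro ⟨hadj, rfl⟩; exact ⟨rfl, hadj⟩
    · rintro ⟨rfl, hadj⟩; exact ⟨hadj, rfl⟩
  have hc2 : ((S.filter fun p => p.1 ≠ v).filter fun p => p.2 = v)
      = G.neighborFinset v ×ˢ {v} := by
    ext p
    simp only [hSdef, Finset.mem_filter, Finset.filter_filter, Finset.mem_univ, true_and,
      Finset.mem_product, Finset.mem_singleton, mem_neighborFinset]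
    constructor
    · rintro ⟨⟨hadj, h1⟩, h2⟩
      exact ⟨by rw [← h2]; exact hadj.symm, h2⟩
    · rintro ⟨hadj, h2⟩
      exact ⟨⟨by rw [h2]; exact hadj.symm, (G.ne_of_adj hadj).symm⟩, h2⟩
  have hc3 : ((S.filter fun p => p.1 ≠ v).filter fun p => p.2 ≠ v)
      = D ∪ D.image Prod.swap := by
    ext p
    simp only [hSdef, hDdef, Finset.mem_filter, Finset.mem_univ, true_and, Finset.mem_union,
      Finset.mem_image]
    constructor
    · rintro ⟨⟨hadj, h1⟩, h2⟩
      rcases lt_or_gt_of_ne (hidx_ne hadj h1 h2) with h | h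
      · exact Or.inl ⟨hadj, h1, h2, h⟩
      · exact Or.inr ⟨(p.2, p.1), ⟨hadj.symm, h2, h1, h⟩, rfl⟩
    · rintro (⟨hadj, h1, h2, _⟩ | ⟨q, ⟨hadj, h1, h2, _⟩, rfl⟩)
      · exact ⟨⟨hadj, h1⟩, h2⟩
      · exact ⟨⟨hadj.symm, h2⟩, h1⟩
  have hDdisj : Disjoint D (D.image Prod.swap) := by
    rw [Finset.disjoint_left]
    rintro p hp hq
    simp only [hDdef, Finset.mem_filter, Finset.mem_univ, true_and, Finset.mem_image] at hp hq
    obtain ⟨q, ⟨_, _, _, hq4⟩, rfl⟩ := hq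
    exact absurd hp.2.2.2 (by simp [Prod.swap]; omega)
  have hc3card : ((S.filter fun p => p.1 ≠ v).filter fun p => p.2 ≠ v).card = 2 * D.card := by
    rw [hc3, Finset.card_union_of_disjoint hDdisj,
      Finset.card_image_of_injective _ Prod.swap_injective]
    omega
  have hedges : G.edgeFinset.card = (∑ i, a i) + D.card := by
    have e1 : (S.filter fun p => p.1 = v).card = ∑ i, a i := by
      rw [hc1, Finset.card_product, Finset.card_singleton, one_mul, hdeg]
    have e2 : ((S.filter fun p => p.1 ≠ v).filter fun p => p.2 = v).card = ∑ i, a i := by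
      rw [hc2, Finset.card_product, Finset.card_singleton, mul_one, hdeg]
    omega
  -- the complete multipartite pair count
  set Q : Finset (Fin r × Fin r) := Finset.univ.filter (fun q : Fin r × Fin r => q.1 < q.2)
    with hQdef
  set PP : Finset (V × V) := Q.biUnion (fun q => Uf q.1 ×ˢ Uf q.2) with hPPdef
  have hPPcard : PP.card = ∑ q ∈ Q, nn q.1 * nn q.2 := by
    rw [hPPdef, Finset.card_biUnion]
    · refine Finset.sum_congr rfl fun q _ => ?_
      rw [Finset.card_product, hUfcard, hUfcard]
    · intro q _ q' _ hqq
      rw [Function.onFun, Finset.disjoint_left]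
      rintro p hp hp'
      simp only [Finset.mem_product, hUfdef, Set.mem_toFinset] at hp hp'
      exact hqq (Prod.ext ((hidx_eq hp.1).symm.trans (hidx_eq hp'.1))
        ((hidx_eq hp.2).symm.trans (hidx_eq hp'.2)))
  set M : Finset (V × V) := Finset.univ.filter
    (fun p : V × V => ¬ G.Adj p.1 p.2 ∧ G.Adj v p.1 ∧ G.Adj v p.2 ∧ idx p.1 < idx p.2)
    with hMdef
  have hDM : D.card + M.card ≤ PP.card := by
    rw [← Finset.card_union_of_disjoint]
    · apply Finset.card_le_card
      intro p hp
      simp only [hDdef, hMdef, Finset.mem_union, Finset.mem_filter, Finset.mem_univ,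
        true_and] at hp
      have hmem : p.1 ≠ v → p.2 ≠ v → idx p.1 < idx p.2 → p ∈ PP := by
        intro h1 h2 hlt
        rw [hPPdef, Finset.mem_biUnion]
        refine ⟨(idx p.1, idx p.2), ?_, ?_⟩
        · simp [hQdef, hlt]
        · simp only [Finset.mem_product, hUfdef, Set.mem_toFinset]
          exact ⟨hidx_mem _ h1, hidx_mem _ h2⟩
      rcases hp with ⟨_, h1, h2, hlt⟩ | ⟨_, h1, h2, hlt⟩
      · exact hmem h1 h2 hlt
      · exact hmem (G.ne_of_adj h1).symm (G.ne_of_adj h2).symm hlt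
    · rw [Finset.disjoint_left]
      intro p hp hq
      simp only [hDdef, hMdef, Finset.mem_filter, Finset.mem_univ, true_and] at hp hq
      exact hq.1 hp.1
  -- transversal counting
  set T : Finset (Fin r → V) := Fintype.piFinset Af with hTdef
  have hTcard : T.card = ∏ i, a i := by
    rw [hTdef, Fintype.card_piFinset]
    exact Finset.prod_congr rfl fun i _ => hAfcard i
  have hTmem : ∀ {t : Fin r → V}, t ∈ T → ∀ i, G.Adj v (t i) ∧ t i ∈ U i := by
    intro t ht i
    exact hAfmem.1 (Fintype.mem_piFinset.1 ht i)
  have hkey : ∀ t ∈ T, ∃ q : Fin r × Fin r, q.1 < q.2 ∧ ¬ G.Adj (t q.1) (t q.2) := by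
    intro t ht
    by_contra hcon
    push_neg at hcon
    have hadj : ∀ i j : Fin r, i ≠ j → G.Adj (t i) (t j) := by
      intro i j hij
      rcases lt_or_gt_of_ne hij with h | h
      · exact hcon (i, j) h
      · exact (hcon (j, i) h).symm
    have htinj : Function.Injective t := by
      intro i j hij
      by_contra hne
      exact Set.disjoint_left.1 (hdisj hne) (hTmem ht i).2 (hij ▸ (hTmem ht j).2)
    have hvnot : v ∉ Finset.image t Finset.univ := by
      simp only [Finset.mem_image]
      rintro ⟨i, -, hi⟩
      exact hUv i (hi ▸ (hTmem ht i).2)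
    apply hfree (insert v (Finset.image t Finset.univ))
    constructor
    · intro x hx y hy hxy
      simp only [Finset.coe_insert, Set.mem_insert_iff, Finset.coe_image, Set.mem_image,
        Finset.mem_coe, Finset.mem_univ, true_and, Finset.coe_univ, Set.mem_univ] at hx hy
      rcases hx with rfl | ⟨i, -, rfl⟩
      · rcases hy with rfl | ⟨j, -, rfl⟩
        · exact absurd rfl hxy
        · exact (hTmem ht j).1
      · rcases hy with rfl | ⟨j, -, rfl⟩
        · exact ((hTmem ht i).1).symm
        · exact hadj i j fun h => hxy (congrArg t h)
    · rw [Finset.card_insert_of_notMem hvnot, Finset.card_image_of_injective _ htinj,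
        Finset.card_univ, Fintype.card_fin]
  set g : (Fin r → V) → V × V := fun t =>
    if h : ∃ q : Fin r × Fin r, q.1 < q.2 ∧ ¬ G.Adj (t q.1) (t q.2)
    then (t h.choose.1, t h.choose.2) else (v, v) with hgdef
  have hg : ∀ t ∈ T, g t ∈ M := by
    intro t ht
    have h := hkey t ht
    simp only [hgdef, dif_pos h]
    obtain ⟨hlt, hnadj⟩ := h.choose_spec
    simp only [hMdef, Finset.mem_filter, Finset.mem_univ, true_and]
    refine ⟨hnadj, (hTmem ht _).1, (hTmem ht _).1, ?_⟩
    rw [hidx_eq (hTmem ht h.choose.1).2, hidx_eq (hTmem ht h.choose.2).2]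
    exact hlt
  have hfiber : ∀ m ∈ M, a i0 * a i1 * (T.filter fun t => g t = m).card ≤ ∏ i, a i := by
    intro m hm
    simp only [hMdef, Finset.mem_filter, Finset.mem_univ, true_and] at hm
    obtain ⟨hnadj, hv1, hv2, hlt⟩ := hm
    have hij : idx m.1 ≠ idx m.2 := ne_of_lt hlt
    have hsub : (T.filter fun t => g t = m) ⊆
        Fintype.piFinset (fun k => if k = idx m.1 then {m.1}
          else if k = idx m.2 then {m.2} else Af k) := by
      intro t ht
      obtain ⟨htT, htg⟩ := Finset.mem_filter.1 ht
      have h := hkey t htT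
      rw [hgdef] at htg
      simp only [dif_pos h] at htg
      have h1 : t h.choose.1 = m.1 := congrArg Prod.fst htg
      have h2 : t h.choose.2 = m.2 := congrArg Prod.snd htg
      have hqi : h.choose.1 = idx m.1 := by
        rw [← h1, hidx_eq (hTmem htT h.choose.1).2]
      have hqj : h.choose.2 = idx m.2 := by
        rw [← h2, hidx_eq (hTmem htT h.choose.2).2]
      rw [Fintype.mem_piFinset]
      intro k
      by_cases hk1 : k = idx m.1
      · subst hk1
        rw [if_pos rfl, Finset.mem_singleton, ← hqi]
        exact h1
      · by_cases hk2 : k = idx m.2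
        · subst hk2
          rw [if_neg hk1, if_pos rfl, Finset.mem_singleton, ← hqj]
          exact h2
        · simp only [if_neg hk1, if_neg hk2]
          exact Fintype.mem_piFinset.1 htT k
    have hcardsub : (T.filter fun t => g t = m).card ≤
        ∏ k, (if k = idx m.1 then ({m.1} : Finset V)
          else if k = idx m.2 then {m.2} else Af k).card := by
      rw [← Fintype.card_piFinset]
      exact Finset.card_le_card hsub
    have hjmem : idx m.2 ∈ Finset.univ.erase (idx m.1) :=
      Finset.mem_erase.2 ⟨hij.symm, Finset.mem_univ _⟩
    have e1 : (∏ k, (if k = idx m.1 then ({m.1} : Finset V)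
          else if k = idx m.2 then {m.2} else Af k).card)
        = ∏ k ∈ (Finset.univ.erase (idx m.1)).erase (idx m.2), a k := by
      rw [← Finset.mul_prod_erase Finset.univ _ (Finset.mem_univ (idx m.1)),
          ← Finset.mul_prod_erase (Finset.univ.erase (idx m.1)) _ hjmem]
      rw [if_pos rfl, if_neg hij.symm, if_pos rfl]
      simp only [Finset.card_singleton, one_mul]
      refine Finset.prod_congr rfl fun k hk => ?_
      obtain ⟨hkj, hki, -⟩ : k ≠ idx m.2 ∧ k ≠ idx m.1 ∧ k ∈ Finset.univ := by
        simpa [Finset.mem_erase, and_assoc] using hk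
      rw [if_neg hki, if_neg hkj]
      exact hAfcard k
    have e2 : (∏ k, a k)
        = a (idx m.1) * (a (idx m.2) * ∏ k ∈ (Finset.univ.erase (idx m.1)).erase (idx m.2), a k) := by
      rw [Finset.mul_prod_erase (Finset.univ.erase (idx m.1)) a hjmem,
          Finset.mul_prod_erase Finset.univ a (Finset.mem_univ (idx m.1))]
    have hmono1 : a i0 ≤ a (idx m.1) := hmono (by simp [hi0, Fin.le_def])
    have hmono2 : a i1 ≤ a (idx m.2) := by
      refine hmono ?_
      have h' : (idx m.1 : ℕ) < (idx m.2 : ℕ) := hlt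
      rw [hi1, Fin.le_def]
      show 1 ≤ (idx m.2 : ℕ)
      omega
    calc a i0 * a i1 * (T.filter fun t => g t = m).card
        ≤ a (idx m.1) * a (idx m.2) * ∏ k, (if k = idx m.1 then ({m.1} : Finset V)
          else if k = idx m.2 then {m.2} else Af k).card :=
          Nat.mul_le_mul (Nat.mul_le_mul hmono1 hmono2) hcardsub
      _ = ∏ k, a k := by rw [e1, e2, mul_assoc]
  have hM : a i0 * a i1 ≤ M.card := by
    rcases Nat.eq_zero_or_pos (∏ i, a i) with hz | hp
    · obtain ⟨k, -, hk⟩ := Finset.prod_eq_zero_iff.1 hz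
      have h0 : a i0 = 0 := Nat.le_antisymm (hk ▸ hmono (by simp [hi0, Fin.le_def])) (Nat.zero_le _)
      simp [h0]
    · have h1 : T.card = ∑ m ∈ M, (T.filter fun t => g t = m).card :=
        Finset.card_eq_sum_card_fiberwise hg
      have h2 : a i0 * a i1 * ∏ i, a i ≤ M.card * ∏ i, a i := by
        calc a i0 * a i1 * ∏ i, a i
            = ∑ m ∈ M, a i0 * a i1 * (T.filter fun t => g t = m).card := by
              rw [← Finset.mul_sum, ← h1, hTcard]
          _ ≤ ∑ m ∈ M, ∏ i, a i := Finset.sum_le_sum hfiber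
          _ = M.card * ∏ i, a i := by rw [Finset.sum_const, smul_eq_mul]
      exact Nat.le_of_mul_le_mul_right h2 hp
  -- assemble
  have hEC : edgeCount G = G.edgeFinset.card := by
    rw [edgeCount, Nat.card_coe_set_eq, Set.ncard_eq_toFinset_card']
    congr 1
  have key : edgeCount G + M.card ≤ (∑ q ∈ Q, nn q.1 * nn q.2) + ∑ i, a i := by
    rw [hEC, hedges, ← hPPcard]
    omega
  have hM' : ((a i0 : ℤ)) * (a i1 : ℤ) ≤ (M.card : ℤ) := by exact_mod_cast hM
  have key' : (edgeCount G : ℤ) + (M.card : ℤ)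
      ≤ (∑ q ∈ Q, (nn q.1 : ℤ) * (nn q.2 : ℤ)) + ∑ i, (a i : ℤ) := by
    exact_mod_cast key
  have final : (edgeCount G : ℤ) ≤ (∑ q ∈ Q, (nn q.1 : ℤ) * (nn q.2 : ℤ))
      - (a i0 : ℤ) * (a i1 : ℤ) + ∑ i, (a i : ℤ) := by linarith
  exact final
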